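/- Let H be a finite-dimensional complex Hilbert space and let a be a Hermitian operator on H satisfying: for every rank-one orthogonal projection q with Tr(a q) = 0 and every Hermitian traceless h, Tr(a · i[q,h]) = 0. If |e₁⟩, |e₂⟩ ∈ H are linearly independent unit vectors with Tr(a |e₁⟩⟨e₁|) = 0 and Tr(a |e₂⟩⟨e₂|) = 0, then for every nonzero vector |g⟩ = α₁|e₁⟩ + α₂|e₂⟩ (α₁, α₂ ∈ ℂ), the projection g = |g⟩⟨g|/⟨g|g⟩ satisfies Tr(a g) = 0. -/

import Mathlib

/-!
If `⟨e, a e⟩ = 0` for a unit vector `e`, then `w = a e` is orthogonal to `e`, and the traceless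
Hermitian perturbation `h = |e⟩⟨i w| + |i w⟩⟨e|` gives `Tr(a · i[|e⟩⟨e|, h]) = 2‖w‖²`. So the
tangent condition forces `a e = 0`: `a` kills `e₁` and `e₂`, hence their whole span.
-/

open Matrix
open scoped ComplexOrder

namespace EWitness

/-- The rank one projector `|v⟩⟨v|`. -/
def proj {m : Type*} (v : m → ℂ) : Matrix m m ℂ := Matrix.vecMulVec v (star v)

/-- The trace inner product `(a,b) = Tr(a† b)` (its real part; on the real vector space of
Hermitian operators this is exactly the trace inner product, which is real-valued there). -/
noncomputable def tinner {m : Type*} [Fintype m] (a b : Matrix m m ℂ) : ℝ :=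
  ((aᴴ * b).trace).re

section
variable {m : Type*}

lemma isHermitian_vecMulVec_add (x y : m → ℂ) :
    (vecMulVec x (star y) + vecMulVec y (star x)).IsHermitian := by
  rw [IsHermitian, conjTranspose_add, conjTranspose_vecMulVec, conjTranspose_vecMulVec,
    star_star, star_star, add_comm]

variable [Fintype m]

lemma trace_mul_proj (M : Matrix m m ℂ) (v : m → ℂ) :
    (M * proj v).trace = star v ⬝ᵥ (M *ᵥ v) := by
  rw [proj, mul_vecMulVec, trace_vecMulVec, dotProduct_comm]

lemma tinner_proj {a : Matrix m m ℂ} (ha : a.IsHermitian) (v : m → ℂ) :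
    tinner a (proj v) = (star v ⬝ᵥ (a *ᵥ v)).re := by
  rw [tinner, ha.eq, trace_mul_proj]

lemma star_dotProduct_mulVec_eq_zero_of_tinner_proj {a : Matrix m m ℂ} (ha : a.IsHermitian)
    {v : m → ℂ} (hv : tinner a (proj v) = 0) : star v ⬝ᵥ (a *ᵥ v) = 0 :=
  Complex.ext (by rwa [← tinner_proj ha]) (ha.im_star_dotProduct_mulVec_self v)

lemma tinner_I_smul_commutator_proj {a h : Matrix m m ℂ} (ha : a.IsHermitian)
    (hh : h.IsHermitian) (v : m → ℂ) :
    tinner a (Complex.I • (proj v * h - h * proj v)) =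
      -2 * (star v ⬝ᵥ (h *ᵥ (a *ᵥ v))).im := by
  have hconj : star v ⬝ᵥ (a *ᵥ (h *ᵥ v)) = star (star v ⬝ᵥ (h *ᵥ (a *ᵥ v))) := by
    rw [star_dotProduct]
    congr 1
    rw [star_mulVec, ha.eq, ← dotProduct_mulVec, star_mulVec, hh.eq, ← dotProduct_mulVec]
  have hPh : (a * (proj v * h)).trace = star v ⬝ᵥ (h *ᵥ (a *ᵥ v)) := by
    rw [← Matrix.mul_assoc, trace_mul_comm, ← Matrix.mul_assoc, trace_mul_proj, mulVec_mulVec]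
  have hhP : (a * (h * proj v)).trace = star v ⬝ᵥ (a *ᵥ (h *ᵥ v)) := by
    rw [← Matrix.mul_assoc, trace_mul_proj, mulVec_mulVec]
  rw [tinner, ha.eq, mul_smul_comm, trace_smul, Matrix.mul_sub, trace_sub, hPh, hhP, hconj,
    smul_eq_mul, Complex.star_def, Complex.sub_conj]
  simp

lemma mulVec_eq_zero_of_tinner_commutator_proj_eq_zero {a : Matrix m m ℂ}
    (ha : a.IsHermitian) {v : m → ℂ} (hv : star v ⬝ᵥ v = 1) (hz : tinner a (proj v) = 0)
    (htan : ∀ h : Matrix m m ℂ, h.IsHermitian → h.trace = 0 →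
      tinner a (Complex.I • (proj v * h - h * proj v)) = 0) :
    a *ᵥ v = 0 := by
  set w := a *ᵥ v
  have hvw : star v ⬝ᵥ w = 0 := star_dotProduct_mulVec_eq_zero_of_tinner_proj ha hz
  have hwv : star w ⬝ᵥ v = 0 := by rw [star_dotProduct, hvw, star_zero]
  set h := vecMulVec v (star (Complex.I • w)) + vecMulVec (Complex.I • w) (star v)
  have hh : h.IsHermitian := isHermitian_vecMulVec_add _ _
  have htr : h.trace = 0 := by
    simp [h, dotProduct_comm v, dotProduct_comm w, hvw, hwv]
  have hhw : star v ⬝ᵥ (h *ᵥ w) = -Complex.I * (star w ⬝ᵥ w) := by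
    rw [add_mulVec, vecMulVec_mulVec, vecMulVec_mulVec, dotProduct_add]
    simp [hv, hvw]
  have hw : (star w ⬝ᵥ w).re = 0 := by
    have := htan h hh htr
    rw [tinner_I_smul_commutator_proj ha hh, hhw] at this
    simpa using this
  exact dotProduct_star_self_eq_zero.mp
    (Complex.ext hw (Complex.nonneg_iff.mp (dotProduct_star_self_nonneg w)).2.symm)

end

theorem line_of_orthogonal_projections_general
    {m : Type*} [Fintype m] (a : Matrix m m ℂ) (ha : a.IsHermitian)
    (hstar : ∀ v : m → ℂ, star v ⬝ᵥ v = 1 → tinner a (proj v) = 0 →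
      ∀ h : Matrix m m ℂ, h.IsHermitian → h.trace = 0 →
        tinner a (Complex.I • (proj v * h - h * proj v)) = 0)
    (e₁ e₂ : m → ℂ) (he₁ : star e₁ ⬝ᵥ e₁ = 1) (he₂ : star e₂ ⬝ᵥ e₂ = 1)
    (hz₁ : tinner a (proj e₁) = 0) (hz₂ : tinner a (proj e₂) = 0) :
    ∀ α₁ α₂ : ℂ, α₁ • e₁ + α₂ • e₂ ≠ 0 →
      tinner a ((star (α₁ • e₁ + α₂ • e₂) ⬝ᵥ (α₁ • e₁ + α₂ • e₂))⁻¹ •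
        proj (α₁ • e₁ + α₂ • e₂)) = 0 := by
  intro α₁ α₂ _
  have hae₁ := mulVec_eq_zero_of_tinner_commutator_proj_eq_zero ha he₁ hz₁ (hstar e₁ he₁ hz₁)
  have hae₂ := mulVec_eq_zero_of_tinner_commutator_proj_eq_zero ha he₂ hz₂ (hstar e₂ he₂ hz₂)
  have hag : a *ᵥ (α₁ • e₁ + α₂ • e₂) = 0 := by
    rw [mulVec_add, mulVec_smul, mulVec_smul, hae₁, hae₂, smul_zero, smul_zero, add_zero]
  rw [tinner, ha.eq, mul_smul_comm, trace_smul, trace_mul_proj, hag, dotProduct_zero, smul_zero,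
    Complex.zero_re]

/-- Let `a` be a Hermitian operator satisfying the tangent condition:
for every rank-one orthogonal projection `q` with `Tr(a q) = 0` and every Hermitian
traceless `h`, `Tr(a · i[q,h]) = 0`.  If `|e₁⟩, |e₂⟩` are linearly independent unit
vectors with `Tr(a |e₁⟩⟨e₁|) = 0 = Tr(a |e₂⟩⟨e₂|)`, then for every nonzero
`|g⟩ = α₁|e₁⟩ + α₂|e₂⟩` the normalized projection `|g⟩⟨g|/⟨g|g⟩` also satisfies
`Tr(a g) = 0`. -/
theorem line_of_orthogonal_projections
    {m : Type*} [Fintype m] [DecidableEq m] (a : Matrix m m ℂ) (ha : a.IsHermitian)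
    (hstar : ∀ v : m → ℂ, star v ⬝ᵥ v = 1 → tinner a (proj v) = 0 →
      ∀ h : Matrix m m ℂ, h.IsHermitian → h.trace = 0 →
        tinner a (Complex.I • (proj v * h - h * proj v)) = 0)
    (e₁ e₂ : m → ℂ) (he₁ : star e₁ ⬝ᵥ e₁ = 1) (he₂ : star e₂ ⬝ᵥ e₂ = 1)
    (hli : LinearIndependent ℂ ![e₁, e₂])
    (hz₁ : tinner a (proj e₁) = 0) (hz₂ : tinner a (proj e₂) = 0) :
    ∀ α₁ α₂ : ℂ, α₁ • e₁ + α₂ • e₂ ≠ 0 →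
      tinner a ((star (α₁ • e₁ + α₂ • e₂) ⬝ᵥ (α₁ • e₁ + α₂ • e₂))⁻¹ •
        proj (α₁ • e₁ + α₂ • e₂)) = 0 :=
  line_of_orthogonal_projections_general a ha hstar e₁ e₂ he₁ he₂ hz₁ hz₂

end EWitness
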